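/- Let $N \in \mathbb{N}$ and let $[0,1]^d = \bigcup_{i=1}^N \Omega_i$ be a partition into Lebesgue-measurable sets with $|\Omega_i| = 1/N$ for every $i$. Let $\mathcal{P}_\Omega$ be the random point set obtained by choosing one point independently from each $\Omega_i$ according to normalized Lebesgue measure, and let $\mathcal{P}_N$ be $N$ points chosen independently and uniformly at random from $[0,1]^d$. Then for every $\mathbf{x} \in [0,1]^d$, $\mathrm{Var}\big( \#(\mathcal{P}_\Omega \cap [0,\mathbf{x}]) \big) \le \mathrm{Var}\big( \#(\mathcal{P}_N \cap [0,\mathbf{x}]) \big) = N\, |[0,\mathbf{x}]|\, (1 - |[0,\mathbf{x}]|)$. -/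

import Mathlib

open MeasureTheory
open scoped ENNReal

/-- The uniform probability measure on a subset of `ℝ^d`
(Lebesgue measure restricted to the set and normalized). -/
noncomputable def uMeas {d : ℕ} (s : Set (Fin d → ℝ)) : Measure (Fin d → ℝ) :=
  (volume s)⁻¹ • volume.restrict s

/-- The unit cube `[0,1]^d`. -/
def unitCube (d : ℕ) : Set (Fin d → ℝ) := Set.univ.pi fun _ => Set.Icc (0:ℝ) 1

/-- The anchored box `[0,x] = ∏_j [0, x_j]`. -/
def box {d : ℕ} (x : Fin d → ℝ) : Set (Fin d → ℝ) := Set.univ.pi fun j => Set.Icc 0 (x j)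

/-!
The count is a sum of independent indicators, one per point, so its variance is
`∑ qᵢ (1 - qᵢ)`, where `qᵢ` is the probability that the `i`-th point lies in `[0,x]`.
For uniform points `qᵢ = |[0,x]|`; for jittered points `qᵢ = N |Ωᵢ ∩ [0,x]|`, whose sum is
again `N |[0,x]|`, and Cauchy–Schwarz `(∑ qᵢ)² ≤ N ∑ qᵢ²` gives the comparison.
-/

open ProbabilityTheory Finset

lemma variance_indicator_one {Ω : Type*} [MeasurableSpace Ω] (μ : Measure Ω)
    [IsProbabilityMeasure μ] {A : Set Ω} (hA : MeasurableSet A) :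
    Var[A.indicator 1; μ] = μ.real A * (1 - μ.real A) := by
  have hsq : A.indicator (1 : Ω → ℝ) ^ 2 = A.indicator 1 := by
    ext ω; by_cases h : ω ∈ A <;> simp [h]
  have hL2 : MemLp (A.indicator (1 : Ω → ℝ)) 2 μ :=
    memLp_indicator_const 2 hA 1 (Or.inr (measure_ne_top μ A))
  rw [variance_eq_sub hL2, hsq, Pi.one_def, integral_indicator_const _ hA]
  simp only [smul_eq_mul, mul_one]
  ring

lemma variance_sum_indicator_pi {ι : Type*} [Fintype ι] {α : ι → Type*}
    [∀ i, MeasurableSpace (α i)] (μ : ∀ i, Measure (α i))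
    [∀ i, IsProbabilityMeasure (μ i)]
    {A : ∀ i, Set (α i)} (hA : ∀ i, MeasurableSet (A i)) :
    Var[fun P => ∑ i, (A i).indicator 1 (P i); Measure.pi μ] =
      ∑ i, (μ i).real (A i) * (1 - (μ i).real (A i)) := by
  set X : ∀ i, (∀ j, α j) → ℝ := fun i P => (A i).indicator 1 (P i)
  have hindep : iIndepFun X (Measure.pi μ) :=
    iIndepFun_pi fun i => (measurable_one.indicator (hA i)).aemeasurable
  have hL2 : ∀ i ∈ (univ : Finset ι), MemLp (X i) 2 (Measure.pi μ) := fun i _ =>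
    memLp_indicator_const 2 (measurable_pi_apply i (hA i)) 1 (Or.inr (measure_ne_top _ _))
  rw [← Finset.sum_fn, IndepFun.variance_sum hL2 fun i _ j _ hij => hindep.indepFun hij]
  refine sum_congr rfl fun i _ => ?_
  rw [(measurePreserving_eval μ i).variance_fun_comp
      (measurable_one.indicator (hA i)).aemeasurable, variance_indicator_one _ (hA i)]

lemma card_filter_mem_eq_sum_indicator {ι α : Type*} [Fintype ι] (B : Set α)
    [DecidablePred (· ∈ B)] (P : ι → α) :
    (#{i | P i ∈ B} : ℝ) = ∑ i, B.indicator 1 (P i) := by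
  rw [card_filter, Nat.cast_sum]
  exact sum_congr rfl fun i _ => by by_cases h : P i ∈ B <;> simp [h]

lemma variance_card_filter_mem_pi {ι α : Type*} [Fintype ι] [MeasurableSpace α]
    (μ : ι → Measure α) [∀ i, IsProbabilityMeasure (μ i)] {B : Set α}
    (hB : MeasurableSet B) [DecidablePred (· ∈ B)] :
    Var[fun P : ι → α => (#{i | P i ∈ B} : ℝ); Measure.pi μ] =
      ∑ i, (μ i).real B * (1 - (μ i).real B) := by
  simp_rw [card_filter_mem_eq_sum_indicator]
  exact variance_sum_indicator_pi μ fun _ => hB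

lemma sum_mul_one_sub_le_of_sum_eq {ι : Type*} (s : Finset ι) (q : ι → ℝ) {p : ℝ}
    (hq : ∑ i ∈ s, q i = #s * p) :
    ∑ i ∈ s, q i * (1 - q i) ≤ #s * (p * (1 - p)) := by
  have hcs := sq_sum_le_card_mul_sum_sq (s := s) (f := q)
  rw [hq] at hcs
  have hsq : #s * p ^ 2 ≤ ∑ i ∈ s, q i ^ 2 := by
    rcases (Nat.cast_nonneg (α := ℝ) #s).eq_or_lt with h | h
    · rw [← h, zero_mul]; exact sum_nonneg fun i _ => sq_nonneg _
    · nlinarith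
  have hexp : ∑ i ∈ s, q i * (1 - q i) = ∑ i ∈ s, q i - ∑ i ∈ s, q i ^ 2 := by
    rw [← sum_sub_distrib]; exact sum_congr rfl fun i _ => by ring
  rw [hexp, hq]
  linarith

section uMeas

variable {d : ℕ}

lemma uMeas_apply (s : Set (Fin d → ℝ)) {B : Set (Fin d → ℝ)} (hB : MeasurableSet B) :
    uMeas s B = (volume s)⁻¹ * volume (B ∩ s) := by
  rw [uMeas, Measure.smul_apply, Measure.restrict_apply hB, smul_eq_mul]

lemma isProbabilityMeasure_uMeas {s : Set (Fin d → ℝ)} (h0 : volume s ≠ 0)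
    (htop : volume s ≠ ∞) :
    IsProbabilityMeasure (uMeas s) :=
  ⟨by rw [uMeas_apply s MeasurableSet.univ, Set.univ_inter, ENNReal.inv_mul_cancel h0 htop]⟩

lemma sum_uMeas_of_volume_eq {ι : Type*} [Fintype ι] {Ω : ι → Set (Fin d → ℝ)}
    (hmeas : ∀ i, MeasurableSet (Ω i)) (hdisj : Pairwise (Function.onFun Disjoint Ω))
    {c : ℝ≥0∞} (hvol : ∀ i, volume (Ω i) = c) {B : Set (Fin d → ℝ)} (hB : MeasurableSet B) :
    ∑ i, uMeas (Ω i) B = c⁻¹ * volume (B ∩ ⋃ i, Ω i) := by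
  simp_rw [uMeas_apply _ hB, hvol, ← mul_sum, Set.inter_iUnion]
  rw [measure_iUnion (hdisj.mono fun _ _ h => h.mono Set.inter_subset_right
    Set.inter_subset_right) fun i => hB.inter (hmeas i), tsum_fintype]

lemma volume_unitCube : volume (unitCube d) = 1 := by
  rw [unitCube, volume_pi_pi]
  simp [Real.volume_Icc]

lemma measurableSet_box (x : Fin d → ℝ) : MeasurableSet (box x) :=
  MeasurableSet.univ_pi fun _ => measurableSet_Icc

lemma box_subset_unitCube {x : Fin d → ℝ} (hx : x ∈ unitCube d) : box x ⊆ unitCube d :=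
  Set.pi_mono fun j _ => Set.Icc_subset_Icc_right (hx j (Set.mem_univ j)).2

end uMeas

open Classical in
theorem partition_count_variance_le_general (d N : ℕ) (Ω : Fin N → Set (Fin d → ℝ))
    (hmeas : ∀ i, MeasurableSet (Ω i))
    (hvol : ∀ i, volume (Ω i) = 1 / (N : ℝ≥0∞))
    (hdisj : Pairwise (Function.onFun Disjoint Ω))
    (hcover : ⋃ i, Ω i = unitCube d)
    (x : Fin d → ℝ) (hx : x ∈ unitCube d) :
    ProbabilityTheory.variance
        (fun P => ((Finset.univ.filter fun i => P i ∈ box x).card : ℝ))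
        (Measure.pi (fun i => uMeas (Ω i))) ≤
      ProbabilityTheory.variance
        (fun P => ((Finset.univ.filter fun i => P i ∈ box x).card : ℝ))
        (Measure.pi (fun _ : Fin N => uMeas (unitCube d))) ∧
    ProbabilityTheory.variance
        (fun P => ((Finset.univ.filter fun i => P i ∈ box x).card : ℝ))
        (Measure.pi (fun _ : Fin N => uMeas (unitCube d))) =
      N * (volume (box x)).toReal * (1 - (volume (box x)).toReal) := by
  have hB := measurableSet_box x
  have hsub := box_subset_unitCube hx
  have : ∀ i, IsProbabilityMeasure (uMeas (Ω i)) := fun i =>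
    isProbabilityMeasure_uMeas (by simp [hvol]) (by simp [hvol, i.pos.ne'])
  have : IsProbabilityMeasure (uMeas (unitCube d)) :=
    isProbabilityMeasure_uMeas (by simp [volume_unitCube]) (by simp [volume_unitCube])
  have hunif : (uMeas (unitCube d)).real (box x) = volume.real (box x) := by
    rw [measureReal_def, uMeas_apply _ hB, Set.inter_eq_left.2 hsub, volume_unitCube, inv_one,
      one_mul, measureReal_def]
  have hjit : ∑ i, (uMeas (Ω i)).real (box x) = N * volume.real (box x) := by
    simp_rw [measureReal_def]
    rw [← ENNReal.toReal_sum fun i _ => measure_ne_top _ _,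
      sum_uMeas_of_volume_eq hmeas hdisj hvol hB, hcover, Set.inter_eq_left.2 hsub]
    simp
  have hcs := sum_mul_one_sub_le_of_sum_eq univ (fun i => (uMeas (Ω i)).real (box x))
    (p := volume.real (box x)) (by rwa [card_univ, Fintype.card_fin])
  rw [card_univ, Fintype.card_fin] at hcs
  rw [variance_card_filter_mem_pi _ hB, variance_card_filter_mem_pi _ hB, hunif, sum_const,
    card_univ, Fintype.card_fin, nsmul_eq_mul, ← measureReal_def, mul_assoc]
  exact ⟨hcs, rfl⟩

open Classical in
/-- For a partition of `[0,1]^d` into `N` measurable sets of measure `1/N`, the variance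
of the number of jittered points in `[0,x]` is at most the corresponding variance for
`N` independent uniform points, which equals `N·|[0,x]|·(1 - |[0,x]|)`. -/
theorem partition_count_variance_le (d N : ℕ) (hN : 0 < N) (Ω : Fin N → Set (Fin d → ℝ))
    (hmeas : ∀ i, MeasurableSet (Ω i))
    (hvol : ∀ i, volume (Ω i) = 1 / (N : ℝ≥0∞))
    (hdisj : Pairwise (Function.onFun Disjoint Ω))
    (hcover : ⋃ i, Ω i = unitCube d)
    (x : Fin d → ℝ) (hx : x ∈ unitCube d) :
    ProbabilityTheory.variance
        (fun P => ((Finset.univ.filter fun i => P i ∈ box x).card : ℝ))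
        (Measure.pi (fun i => uMeas (Ω i))) ≤
      ProbabilityTheory.variance
        (fun P => ((Finset.univ.filter fun i => P i ∈ box x).card : ℝ))
        (Measure.pi (fun _ : Fin N => uMeas (unitCube d))) ∧
    ProbabilityTheory.variance
        (fun P => ((Finset.univ.filter fun i => P i ∈ box x).card : ℝ))
        (Measure.pi (fun _ : Fin N => uMeas (unitCube d))) =
      N * (volume (box x)).toReal * (1 - (volume (box x)).toReal) :=
  partition_count_variance_le_general d N Ω hmeas hvol hdisj hcover x hx
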